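/- arXiv:2505.19499 — 2 statements merged into one kernel-verified Lean document; each statement's English description precedes it below -/
import Mathlib

section
/- Let (V; f, g) be a dual-modular instance with V nonempty. Then there is a unique maximal (with respect to set inclusion) densest subset, i.e. a unique nonempty S₁ ⊆ V maximizing ρ(S) = f(S)/g(S) over nonempty subsets such that every densest subset is contained in S₁. -/
/-!
Let `ρ` be the maximum density. Then `f - ρ g` is supermodular (as `g` is submodular and
`ρ ≥ 0`), nonpositive, and vanishes exactly on `∅` and on the densest subsets, so the densest
subsets are the nonempty maximizers of `f - ρ g`. The maximizers of a supermodular function are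
closed under union; hence the union of all densest subsets is itself densest, and it is the
unique maximal one.
-/

open Finset

variable {V : Type*} [Fintype V] [DecidableEq V]

/-- A set function is supermodular. -/
def Supermodular (f : Finset V → ℝ) : Prop :=
  ∀ A B : Finset V, f A + f B ≤ f (A ∩ B) + f (A ∪ B)

/-- A set function is submodular. -/
def Submodular (g : Finset V → ℝ) : Prop :=
  ∀ A B : Finset V, g (A ∩ B) + g (A ∪ B) ≤ g A + g B

/-- A set function is monotone. -/
def MonotoneFn (f : Finset V → ℝ) : Prop :=
  ∀ A B : Finset V, A ⊆ B → f A ≤ f B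

/-- A set function is strictly monotone. -/
def StrictMonoFn (g : Finset V → ℝ) : Prop :=
  ∀ A B : Finset V, A ⊂ B → g A < g B

/-- A dual-modular instance `(V; f, g)`: `f` is a nonnegative monotone supermodular
reward function, `g` is a nonnegative strictly monotone submodular cost function,
both vanishing on the empty set. -/
structure DualModular (f g : Finset V → ℝ) : Prop where
  f_nonneg : ∀ A, 0 ≤ f A
  g_nonneg : ∀ A, 0 ≤ g A
  f_empty : f ∅ = 0
  g_empty : g ∅ = 0
  f_mono : MonotoneFn f
  g_strictMono : StrictMonoFn g
  f_supermodular : Supermodular f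
  g_submodular : Submodular g

/-- Density of a subset. -/
noncomputable def density (f g : Finset V → ℝ) (S : Finset V) : ℝ := f S / g S

/-- Marginal contribution `h(S|A) = h(S ∪ A) - h(A)`. -/
def marginal (h : Finset V → ℝ) (S A : Finset V) : ℝ := h (S ∪ A) - h A

/-- Marginal density `ρ(S|A) = f(S|A)/g(S|A)`. -/
noncomputable def margDensity (f g : Finset V → ℝ) (S A : Finset V) : ℝ :=
  marginal f S A / marginal g S A

/-- `S_{<i}`: the union of earlier parts in an indexed family. -/
def below {k : ℕ} (S : Fin k → Finset V) (i : Fin k) : Finset V :=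
  (Finset.univ.filter (fun j => j < i)).biUnion S

/-- The density decomposition `V = S₁ ∪ … ∪ S_k`: each `S i` is a nonempty maximal
densest subset of the remaining instance with marginal functions. -/
structure IsDensityDecomposition (f g : Finset V → ℝ) {k : ℕ} (S : Fin k → Finset V) :
    Prop where
  nonempty : ∀ i, (S i).Nonempty
  disj : ∀ i, Disjoint (S i) (below S i)
  cover : Finset.univ.biUnion S = (Finset.univ : Finset V)
  maxDensity : ∀ i, ∀ T : Finset V, T.Nonempty → Disjoint T (below S i) →
    margDensity f g T (below S i) ≤ margDensity f g (S i) (below S i)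
  maximal : ∀ i, ∀ T : Finset V, T.Nonempty → Disjoint T (below S i) →
    margDensity f g (S i) (below S i) ≤ margDensity f g T (below S i) → T ⊆ S i

/-- `ρ_i`, the density of the `i`-th component of the decomposition. -/
noncomputable def decompDensity (f g : Finset V → ℝ) {k : ℕ} (S : Fin k → Finset V)
    (i : Fin k) : ℝ :=
  margDensity f g (S i) (below S i)

/-- Membership in the base contrapolymatroid `B≥_f`. -/
def memBf (f : Finset V → ℝ) (x : V → ℝ) : Prop :=
  (∀ v, 0 ≤ x v) ∧ (∑ v, x v = f Finset.univ) ∧ ∀ A : Finset V, f A ≤ ∑ v ∈ A, x v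

/-- Membership in the base polymatroid `B≤_g`. -/
def memBg (g : Finset V → ℝ) (y : V → ℝ) : Prop :=
  (∀ v, 0 ≤ y v) ∧ (∑ v, y v = g Finset.univ) ∧ ∀ A : Finset V, ∑ v ∈ A, y v ≤ g A

/-- An allocation is a pair `(x, y) ∈ B≥_f × B≤_g`. -/
def Allocation (f g : Finset V → ℝ) (x y : V → ℝ) : Prop := memBf f x ∧ memBg g y

/-- The locally maximin condition for an allocation. -/
def LocallyMaximin (f g : Finset V → ℝ) (x y : V → ℝ) : Prop :=
  ∀ ρ : ℝ, 0 < ρ →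
    (∑ v ∈ Finset.univ.filter (fun v => ρ ≤ x v / y v), x v
       = f (Finset.univ.filter (fun v => ρ ≤ x v / y v))) ∧
    (∑ v ∈ Finset.univ.filter (fun v => ρ ≤ x v / y v), y v
       = g (Finset.univ.filter (fun v => ρ ≤ x v / y v)))

/-- The multiset of induced densities, sorted in non-increasing order. -/
noncomputable def sortedDensities (x y : V → ℝ) : List ℝ :=
  ((Finset.univ.val.map (fun v => x v / y v)).sort (· ≤ ·)).reverse

/-- An allocation is lexicographically optimal if its non-increasingly sorted density
vector is lexicographically minimal among all allocations. -/
def LexOptimal (f g : Finset V → ℝ) (x y : V → ℝ) : Prop :=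
  Allocation f g x y ∧
  ∀ x' y' : V → ℝ, Allocation f g x' y' → sortedDensities x y ≤ sortedDensities x' y'

/-- The hockey-stick divergence `HS_γ(x ‖ y)`. -/
noncomputable def HS (γ : ℝ) (x y : V → ℝ) : ℝ := ∑ u, max (x u - γ * y u) 0

/-- The `θ`-divergence `D_θ(x ‖ y) = Σ_u y_u · θ(x_u / y_u)`. -/
noncomputable def Dtheta (θ : ℝ → ℝ) (x y : V → ℝ) : ℝ := ∑ u, y u * θ (x u / y u)

/-- Permutations of `V`, encoded as bijections to positions `Fin |V|`;
`u ≺_σ v` iff `σ u < σ v`. -/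
abbrev Perms (V : Type*) [Fintype V] := V ≃ Fin (Fintype.card V)

/-- `h^σ(u)`: the marginal contribution of `u` given the elements preceding it in `σ`. -/
def permVal (h : Finset V → ℝ) (σ : Perms V) (u : V) : ℝ :=
  h (insert u (Finset.univ.filter (fun w => σ w < σ u))) -
    h (Finset.univ.filter (fun w => σ w < σ u))

/-- A probability distribution on permutations of `V`. -/
def IsDist (p : Perms V → ℝ) : Prop := (∀ σ, 0 ≤ p σ) ∧ ∑ σ, p σ = 1

/-- `h^p(u) = Σ_σ p_σ · h^σ(u)`. -/
noncomputable def distVal (h : Finset V → ℝ) (p : Perms V → ℝ) (u : V) : ℝ :=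
  ∑ σ, p σ * permVal h σ u

/-- The density induced by a solution `(p, q)`. -/
noncomputable def solDensity (f g : Finset V → ℝ) (p q : Perms V → ℝ) (v : V) : ℝ :=
  distVal f p v / distVal g q v

/-- A solution `(p, q)` is locally maximin if whenever `u` has strictly larger induced
density than `v`, every permutation with positive weight puts `u` before `v`. -/
def LocallyMaximinSol (f g : Finset V → ℝ) (p q : Perms V → ℝ) : Prop :=
  ∀ u v : V, solDensity f g p q v < solDensity f g p q u →
    ∀ σ : Perms V, (0 < p σ ∨ 0 < q σ) → σ u < σ v

/-- The convex-program objective `Φ_θ(p, q) = D_θ(f^p ‖ g^q)`. -/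
noncomputable def Phi (θ : ℝ → ℝ) (f g : Finset V → ℝ) (p q : Perms V → ℝ) : ℝ :=
  Dtheta θ (distVal f p) (distVal g q)

theorem SupClosed.exists_isGreatest {α : Type*} [SemilatticeSup α] {s : Set α}
    (hs : SupClosed s) (hfin : s.Finite) (hne : s.Nonempty) : ∃ a, IsGreatest s a := by
  obtain ⟨m, hm⟩ := hfin.exists_maximal hne
  exact ⟨m, hm.prop, fun x hx => le_sup_right.trans (hm.le_of_ge (hs hm.prop hx) le_sup_left)⟩

section SetFunction

variable {α : Type*} [DecidableEq α]

theorem Supermodular.sub_const_mul {f g : Finset α → ℝ} (hf : Supermodular f)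
    (hg : Submodular g) {c : ℝ} (hc : 0 ≤ c) : Supermodular fun S => f S - c * g S := by
  intro A B
  have := mul_le_mul_of_nonneg_left (hg A B) hc
  linarith [hf A B]

theorem Supermodular.supClosed_maximizers {h : Finset α → ℝ} (hh : Supermodular h) :
    SupClosed {A | ∀ B, h B ≤ h A} := by
  intro A hA B hB T
  have hmod := hh A B
  have hinter := hA (A ∩ B)
  calc h T ≤ h B := hB T
    _ ≤ h (A ⊔ B) := by rw [Finset.sup_eq_union]; linarith

theorem DualModular.g_pos {f g : Finset α → ℝ} (hdm : DualModular f g) {A : Finset α}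
    (hA : A.Nonempty) : 0 < g A :=
  hdm.g_empty ▸ hdm.g_strictMono ∅ A (Finset.empty_ssubset.mpr hA)

theorem DualModular.density_le_iff {f g : Finset α → ℝ} (hdm : DualModular f g)
    {S : Finset α} (hS : S.Nonempty) {c : ℝ} : density f g S ≤ c ↔ f S - c * g S ≤ 0 := by
  rw [density, div_le_iff₀ (hdm.g_pos hS), sub_nonpos]

theorem DualModular.le_density_iff {f g : Finset α → ℝ} (hdm : DualModular f g)
    {S : Finset α} (hS : S.Nonempty) {c : ℝ} : c ≤ density f g S ↔ 0 ≤ f S - c * g S := by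
  rw [density, le_div_iff₀ (hdm.g_pos hS), sub_nonneg]

theorem DualModular.densest_iff_maximizes {f g : Finset α → ℝ} (hdm : DualModular f g)
    {S₀ : Finset α} (hS₀ : S₀.Nonempty)
    (hS₀max : ∀ T : Finset α, T.Nonempty → density f g T ≤ density f g S₀)
    {S : Finset α} (hS : S.Nonempty) :
    (∀ T : Finset α, T.Nonempty → density f g T ≤ density f g S) ↔
      ∀ T, f T - density f g S₀ * g T ≤ f S - density f g S₀ * g S := by
  have hle : ∀ T : Finset α, f T - density f g S₀ * g T ≤ 0 := by
    intro T
    rcases T.eq_empty_or_nonempty with rfl | hT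
    · simp [hdm.f_empty, hdm.g_empty]
    · exact (hdm.density_le_iff hT).1 (hS₀max T hT)
  constructor
  · intro hSmax T
    exact (hle T).trans ((hdm.le_density_iff hS).1 (hSmax S₀ hS₀))
  · intro hSmaximizes T hT
    have hρS : density f g S₀ ≤ density f g S :=
      (hdm.le_density_iff hS).2 <|
        ((hdm.le_density_iff hS₀).1 le_rfl).trans (hSmaximizes S₀)
    exact (hS₀max T hT).trans hρS

end SetFunction

/-- there is a unique maximal densest subset, containing
every densest subset. -/
theorem unique_maximal_densest (f g : Finset V → ℝ) (hdm : DualModular f g)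
    (hV : Nonempty V) :
    ∃! S₁ : Finset V, S₁.Nonempty ∧
      (∀ S : Finset V, S.Nonempty → density f g S ≤ density f g S₁) ∧
      (∀ S : Finset V, S.Nonempty →
        (∀ T : Finset V, T.Nonempty → density f g T ≤ density f g S) → S ⊆ S₁) := by
  obtain ⟨S₀, hS₀, hS₀max⟩ := (univ.filter Finset.Nonempty).exists_max_image (density f g)
    ⟨univ, by simp⟩
  replace hS₀ : S₀.Nonempty := (Finset.mem_filter.1 hS₀).2
  replace hS₀max : ∀ T : Finset V, T.Nonempty → density f g T ≤ density f g S₀ :=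
    fun T hT => hS₀max T (by simpa using hT)
  have densest_iff := fun {S : Finset V} (hS : S.Nonempty) =>
    hdm.densest_iff_maximizes hS₀ hS₀max hS
  have hρ : 0 ≤ density f g S₀ := div_nonneg (hdm.f_nonneg _) (hdm.g_nonneg _)
  obtain ⟨M, hM, hMgreatest⟩ :=
    (hdm.f_supermodular.sub_const_mul hdm.g_submodular hρ).supClosed_maximizers.exists_isGreatest
      (Set.toFinite _) ⟨S₀, (densest_iff hS₀).1 hS₀max⟩
  have hMne : M.Nonempty := hS₀.mono (hMgreatest ((densest_iff hS₀).1 hS₀max))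
  have hMdensest := (densest_iff hMne).2 hM
  refine ⟨M, ⟨hMne, hMdensest, fun S hS hSd => hMgreatest ((densest_iff hS).1 hSd)⟩, ?_⟩
  rintro S ⟨hS, hSd, hSmax⟩
  exact (hMgreatest ((densest_iff hS).1 hSd)).antisymm (hSmax M hMne hMdensest)
end

section
/- Let (V; f, g) be a dual-modular instance with density decomposition V = S₁ ∪ … ∪ S_k and densities ρ₁ > … > ρ_k. Fix γ ≥ 0, let i be the largest index with ρ_i ≥ γ (with i = 0 and S_{≤0} = ∅ if none), and let (x, y) be any locally maximin allocation. Then f(S_{≤i}) − γ·g(S_{≤i}) = HS_γ(x ‖ y) = max_{S ⊆ V} ( f(S) − γ·g(S) ), where S_{≤i} = S₁ ∪ … ∪ S_i. -/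
open Finset

variable {V : Type*} [Fintype V] [DecidableEq V]

/-! ### Auxiliary lemmas for the proof -/

section AuxStrongDuality

variable {f g : Finset V → ℝ}

/-- Prefix union `C_m = S_0 ∪ … ∪ S_{m-1}`. -/
def Cset {k : ℕ} (S : Fin k → Finset V) (m : ℕ) : Finset V :=
  (Finset.univ.filter (fun j : Fin k => j.val < m)).biUnion S

lemma below_eq_Cset {k : ℕ} (S : Fin k → Finset V) (i : Fin k) :
    below S i = Cset S i.val := by
  unfold below Cset
  congr 1

lemma Cset_zero {k : ℕ} (S : Fin k → Finset V) : Cset S 0 = ∅ := by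
  simp [Cset]

lemma Cset_succ {k : ℕ} (S : Fin k → Finset V) {m : ℕ} (h : m < k) :
    Cset S (m + 1) = S ⟨m, h⟩ ∪ Cset S m := by
  unfold Cset
  ext v
  simp only [Finset.mem_biUnion, Finset.mem_filter, Finset.mem_univ, true_and,
    Finset.mem_union]
  constructor
  · rintro ⟨j, hj, hv⟩
    rcases Nat.lt_succ_iff_lt_or_eq.mp hj with h' | h'
    · exact Or.inr ⟨j, h', hv⟩
    · exact Or.inl (by rwa [show (⟨m, h⟩ : Fin k) = j from (Fin.ext h'.symm)])
  · rintro (hv | ⟨j, hj, hv⟩)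
    · exact ⟨⟨m, h⟩, Nat.lt_succ_self m, hv⟩
    · exact ⟨j, Nat.lt_succ_of_lt hj, hv⟩

lemma Cset_univ {k : ℕ} {S : Fin k → Finset V}
    (hcov : Finset.univ.biUnion S = (Finset.univ : Finset V)) {m : ℕ} (hm : k ≤ m) :
    Cset S m = Finset.univ := by
  apply Finset.eq_univ_of_forall
  intro v
  have hv : v ∈ Finset.univ.biUnion S := by rw [hcov]; exact Finset.mem_univ v
  rcases Finset.mem_biUnion.mp hv with ⟨j, _, hvj⟩
  exact Finset.mem_biUnion.mpr
    ⟨j, Finset.mem_filter.mpr ⟨Finset.mem_univ j, lt_of_lt_of_le j.isLt hm⟩, hvj⟩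

lemma g_mono (hdm : DualModular f g) : MonotoneFn g := by
  intro A B hAB
  by_cases h : A = B
  · rw [h]
  · exact (hdm.g_strictMono A B (Finset.ssubset_iff_subset_ne.mpr ⟨hAB, h⟩)).le

lemma marginal_f_nonneg (hdm : DualModular f g) (T A : Finset V) :
    0 ≤ marginal f T A :=
  sub_nonneg.mpr (hdm.f_mono A (T ∪ A) Finset.subset_union_right)

lemma marginal_g_nonneg (hdm : DualModular f g) (T A : Finset V) :
    0 ≤ marginal g T A :=
  sub_nonneg.mpr (g_mono hdm A (T ∪ A) Finset.subset_union_right)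

lemma marginal_g_pos (hdm : DualModular f g) {T A : Finset V} (hT : T.Nonempty)
    (hd : Disjoint T A) : 0 < marginal g T A := by
  apply sub_pos.mpr
  apply hdm.g_strictMono
  obtain ⟨t, ht⟩ := hT
  rw [Finset.ssubset_iff_of_subset Finset.subset_union_right]
  exact ⟨t, Finset.mem_union_left A ht, Finset.disjoint_left.mp hd ht⟩

lemma marginal_union (h : Finset V → ℝ) (X Y B : Finset V) :
    marginal h (X ∪ Y) B = marginal h Y (X ∪ B) + marginal h X B := by
  unfold marginal
  rw [show X ∪ Y ∪ B = Y ∪ (X ∪ B) by ext v; simp [Finset.mem_union]; tauto]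
  ring

lemma maxDensity_mul (hdm : DualModular f g) {k : ℕ} {S : Fin k → Finset V}
    (hdec : IsDensityDecomposition f g S) (i : Fin k) {T : Finset V}
    (hd : Disjoint T (below S i)) :
    marginal f T (below S i) ≤ decompDensity f g S i * marginal g T (below S i) := by
  rcases T.eq_empty_or_nonempty with rfl | hT
  · simp [marginal]
  · have hg := marginal_g_pos hdm hT hd
    have h := hdec.maxDensity i T hT hd
    unfold margDensity at h
    exact (div_le_iff₀ hg).mp h

lemma density_mul (hdm : DualModular f g) {k : ℕ} {S : Fin k → Finset V}
    (hdec : IsDensityDecomposition f g S) (i : Fin k) :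
    marginal f (S i) (below S i)
      = decompDensity f g S i * marginal g (S i) (below S i) := by
  have hg := (marginal_g_pos hdm (hdec.nonempty i) (hdec.disj i)).ne'
  unfold decompDensity margDensity
  rw [div_mul_cancel₀ _ hg]

lemma decompDensity_nonneg (hdm : DualModular f g) {k : ℕ} {S : Fin k → Finset V}
    (hdec : IsDensityDecomposition f g S) (i : Fin k) :
    0 ≤ decompDensity f g S i :=
  div_nonneg (marginal_f_nonneg hdm _ _) (marginal_g_nonneg hdm _ _)

lemma rho_step (hdm : DualModular f g) {k : ℕ} {S : Fin k → Finset V}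
    (hdec : IsDensityDecomposition f g S) {m : ℕ} (h1 : m + 1 < k) :
    decompDensity f g S ⟨m + 1, h1⟩ ≤ decompDensity f g S ⟨m, Nat.lt_of_succ_lt h1⟩ := by
  have hmk : m < k := Nat.lt_of_succ_lt h1
  have hB' : below S ⟨m + 1, h1⟩ = S ⟨m, hmk⟩ ∪ below S ⟨m, hmk⟩ := by
    rw [below_eq_Cset, below_eq_Cset]
    exact Cset_succ S hmk
  have hb : 0 < marginal g (S ⟨m, hmk⟩) (below S ⟨m, hmk⟩) :=
    marginal_g_pos hdm (hdec.nonempty _) (hdec.disj _)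
  have hd : 0 < marginal g (S ⟨m + 1, h1⟩) (below S ⟨m + 1, h1⟩) :=
    marginal_g_pos hdm (hdec.nonempty _) (hdec.disj _)
  have hdisj : Disjoint (S ⟨m, hmk⟩ ∪ S ⟨m + 1, h1⟩) (below S ⟨m, hmk⟩) := by
    refine Finset.disjoint_union_left.mpr ⟨hdec.disj _, ?_⟩
    exact (hdec.disj ⟨m + 1, h1⟩).mono_right (by rw [hB']; exact Finset.subset_union_right)
  have hmax := maxDensity_mul hdm hdec ⟨m, hmk⟩ hdisj
  rw [marginal_union f, marginal_union g, ← hB', mul_add] at hmax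
  have heq := density_mul hdm hdec ⟨m, hmk⟩
  have hgoal : decompDensity f g S ⟨m + 1, h1⟩
      = marginal f (S ⟨m + 1, h1⟩) (below S ⟨m + 1, h1⟩)
        / marginal g (S ⟨m + 1, h1⟩) (below S ⟨m + 1, h1⟩) := rfl
  rw [hgoal, div_le_iff₀ hd]
  linarith

lemma rho_aux (hdm : DualModular f g) {k : ℕ} {S : Fin k → Finset V}
    (hdec : IsDensityDecomposition f g S) :
    ∀ (n : ℕ) (i : Fin k) (h : i.val + n < k),
      decompDensity f g S ⟨i.val + n, h⟩ ≤ decompDensity f g S i := by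
  intro n
  induction n with
  | zero =>
    intro i h
    rw [show (⟨i.val + 0, h⟩ : Fin k) = i from Fin.ext (Nat.add_zero _)]
  | succ n ih =>
    intro i h
    have h' : i.val + n < k := by omega
    exact le_trans (rho_step hdm hdec h) (ih i h')

lemma rho_antitone (hdm : DualModular f g) {k : ℕ} {S : Fin k → Finset V}
    (hdec : IsDensityDecomposition f g S) {i j : Fin k} (hij : i ≤ j) :
    decompDensity f g S j ≤ decompDensity f g S i := by
  have hij' : i.val ≤ j.val := hij
  have hj : j = ⟨i.val + (j.val - i.val), by omega⟩ := by
    apply Fin.ext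
    show j.val = i.val + (j.val - i.val)
    omega
  rw [hj]
  exact rho_aux hdm hdec _ i _

lemma key_W (hdm : DualModular f g) {k : ℕ} {S : Fin k → Finset V}
    (hdec : IsDensityDecomposition f g S) {γ : ℝ} (hγ : 0 ≤ γ) :
    ∀ m : ℕ, (∀ j : Fin k, j.val < m → γ ≤ decompDensity f g S j) →
      ∀ W ⊆ Cset S m, γ * (g (Cset S m) - g W) ≤ f (Cset S m) - f W := by
  intro m
  induction m with
  | zero =>
    intro _ W hW
    rw [Cset_zero] at hW ⊢
    rw [Finset.subset_empty.mp hW]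
    simp [hdm.f_empty, hdm.g_empty]
  | succ m ih =>
    intro hpre W hW
    by_cases hmk : m < k
    swap
    · have e1 : Cset S (m + 1) = Cset S m := by
        rw [Cset_univ hdec.cover (by omega), Cset_univ hdec.cover (by omega)]
      rw [e1] at hW ⊢
      exact ih (fun j hj => hpre j (Nat.lt_succ_of_lt hj)) W hW
    · have hC : Cset S (m + 1) = S ⟨m, hmk⟩ ∪ Cset S m := Cset_succ S hmk
      have hbelow : below S ⟨m, hmk⟩ = Cset S m := below_eq_Cset S _
      have hWU : W ∪ Cset S m = (W ∩ S ⟨m, hmk⟩) ∪ Cset S m := by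
        ext v
        simp only [Finset.mem_union, Finset.mem_inter]
        constructor
        · rintro (hv | hv)
          · have hv' := hW hv
            rw [hC, Finset.mem_union] at hv'
            rcases hv' with h' | h'
            · exact Or.inl ⟨hv, h'⟩
            · exact Or.inr h'
          · exact Or.inr hv
        · rintro (⟨hv, _⟩ | hv)
          · exact Or.inl hv
          · exact Or.inr hv
      have hdisjU : Disjoint (W ∩ S ⟨m, hmk⟩) (below S ⟨m, hmk⟩) :=
        (hdec.disj ⟨m, hmk⟩).mono_left Finset.inter_subset_right
      have h1 := maxDensity_mul hdm hdec ⟨m, hmk⟩ hdisjU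
      have h2 := density_mul hdm hdec ⟨m, hmk⟩
      rw [hbelow] at h1 h2
      have hρ : γ ≤ decompDensity f g S ⟨m, hmk⟩ := hpre _ (Nat.lt_succ_self m)
      have e2 : S ⟨m, hmk⟩ ∪ Cset S m = Cset S (m + 1) := hC.symm
      unfold marginal at h1 h2
      rw [e2] at h2
      rw [mul_sub] at h1 h2
      have hgmono : g ((W ∩ S ⟨m, hmk⟩) ∪ Cset S m) ≤ g (Cset S (m + 1)) := by
        apply g_mono hdm
        rw [hC]
        exact Finset.union_subset_union_left Finset.inter_subset_right
      have hb1 : γ * (g (Cset S (m + 1)) - g ((W ∩ S ⟨m, hmk⟩) ∪ Cset S m)) ≤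
          f (Cset S (m + 1)) - f ((W ∩ S ⟨m, hmk⟩) ∪ Cset S m) := by
        have hx : 0 ≤ g (Cset S (m + 1)) - g ((W ∩ S ⟨m, hmk⟩) ∪ Cset S m) := by linarith
        have hy := mul_le_mul_of_nonneg_right hρ hx
        rw [mul_sub, mul_sub] at hy
        linarith
      have hsupf := hdm.f_supermodular W (Cset S m)
      have hsubg := hdm.g_submodular W (Cset S m)
      have hIH := ih (fun j hj => hpre j (Nat.lt_succ_of_lt hj)) (W ∩ Cset S m)
        Finset.inter_subset_right
      have hsub2 : γ * (g (W ∪ Cset S m) - g W) ≤ γ * (g (Cset S m) - g (W ∩ Cset S m)) :=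
        mul_le_mul_of_nonneg_left (by linarith) hγ
      rw [← hWU] at hb1
      rw [mul_sub] at hb1 hIH hsub2 ⊢
      linarith

lemma key_max (hdm : DualModular f g) {k : ℕ} {S : Fin k → Finset V}
    (hdec : IsDensityDecomposition f g S) {γ : ℝ} (hγ : 0 ≤ γ) (m : ℕ)
    (hpre : ∀ j : Fin k, j.val < m → γ ≤ decompDensity f g S j)
    (hpost : ∀ h : m < k, decompDensity f g S ⟨m, h⟩ < γ) (T : Finset V) :
    f T - γ * g T ≤ f (Cset S m) - γ * g (Cset S m) := by
  have hL : f T - γ * g T ≤ f (T ∪ Cset S m) - γ * g (T ∪ Cset S m) := by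
    have hsup := hdm.f_supermodular T (Cset S m)
    have hsub := hdm.g_submodular T (Cset S m)
    have hW := key_W hdm hdec hγ m hpre (T ∩ Cset S m) Finset.inter_subset_right
    have hsub' : γ * (g (T ∪ Cset S m) - g T) ≤ γ * (g (Cset S m) - g (T ∩ Cset S m)) :=
      mul_le_mul_of_nonneg_left (by linarith) hγ
    rw [mul_sub] at hW hsub'
    linarith
  have hU : f (T ∪ Cset S m) - γ * g (T ∪ Cset S m) ≤ f (Cset S m) - γ * g (Cset S m) := by
    rcases (T \ Cset S m).eq_empty_or_nonempty with he | hne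
    · have heq : T ∪ Cset S m = Cset S m :=
        Finset.union_eq_right.mpr (Finset.sdiff_eq_empty_iff_subset.mp he)
      rw [heq]
    · have hmk : m < k := by
        by_contra hk
        have huniv : Cset S m = Finset.univ := Cset_univ hdec.cover (le_of_not_gt hk)
        obtain ⟨t, ht⟩ := hne
        exact (Finset.mem_sdiff.mp ht).2 (huniv ▸ Finset.mem_univ t)
      have hbelow : below S ⟨m, hmk⟩ = Cset S m := below_eq_Cset S _
      have hdisj : Disjoint (T \ Cset S m) (below S ⟨m, hmk⟩) := by
        rw [hbelow]; exact Finset.sdiff_disjoint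
      have h1 := maxDensity_mul hdm hdec ⟨m, hmk⟩ hdisj
      rw [hbelow] at h1
      have hgpos : 0 ≤ marginal g (T \ Cset S m) (Cset S m) := marginal_g_nonneg hdm _ _
      have h2 : marginal f (T \ Cset S m) (Cset S m)
          ≤ γ * marginal g (T \ Cset S m) (Cset S m) :=
        le_trans h1 (mul_le_mul_of_nonneg_right (hpost hmk).le hgpos)
      have he2 : T \ Cset S m ∪ Cset S m = T ∪ Cset S m := Finset.sdiff_union_self_eq_union
      unfold marginal at h2
      rw [he2, mul_sub] at h2
      linarith
  linarith

lemma y_pos (hdm : DualModular f g) {y : V → ℝ} (hy : memBg g y) (v : V) : 0 < y v := by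
  obtain ⟨hy0, hysum, hyle⟩ := hy
  have h1 : ∑ u ∈ Finset.univ.erase v, y u ≤ g (Finset.univ.erase v) := hyle _
  have h2 : g (Finset.univ.erase v) < g Finset.univ :=
    hdm.g_strictMono _ _ (Finset.erase_ssubset (Finset.mem_univ v))
  have h3 : y v + ∑ u ∈ Finset.univ.erase v, y u = g Finset.univ := by
    rw [← hysum]
    exact Finset.add_sum_erase _ _ (Finset.mem_univ v)
  linarith

lemma bound_HS {γ : ℝ} (hγ : 0 ≤ γ) {x y : V → ℝ} (halloc : Allocation f g x y)
    (T : Finset V) : f T - γ * g T ≤ HS γ x y := by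
  obtain ⟨⟨hx0, hxs, hxle⟩, ⟨hy0, hys, hyle⟩⟩ := halloc
  have h1 : f T - γ * g T ≤ ∑ v ∈ T, (x v - γ * y v) := by
    rw [Finset.sum_sub_distrib, ← Finset.mul_sum]
    have hf := hxle T
    have hg := mul_le_mul_of_nonneg_left (hyle T) hγ
    linarith
  have h2 : ∑ v ∈ T, (x v - γ * y v) ≤ ∑ v ∈ T, max (x v - γ * y v) 0 :=
    Finset.sum_le_sum (fun v _ => le_max_left _ _)
  have h3 : ∑ v ∈ T, max (x v - γ * y v) 0 ≤ HS γ x y :=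
    Finset.sum_le_sum_of_subset_of_nonneg (Finset.subset_univ T)
      (fun v _ _ => le_max_right _ _)
  linarith

lemma HS_level (hdm : DualModular f g) {γ : ℝ} (hγ : 0 < γ) {x y : V → ℝ}
    (halloc : Allocation f g x y) (hlm : LocallyMaximin f g x y) :
    HS γ x y = f (Finset.univ.filter (fun v => γ ≤ x v / y v))
      - γ * g (Finset.univ.filter (fun v => γ ≤ x v / y v)) := by
  obtain ⟨hP1, hP2⟩ := hlm γ hγ
  have hyv : ∀ v, 0 < y v := y_pos hdm halloc.2
  have hsum : HS γ x y
      = ∑ v ∈ Finset.univ.filter (fun v => γ ≤ x v / y v), (x v - γ * y v) := by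
    unfold HS
    rw [← Finset.sum_filter_add_sum_filter_not Finset.univ (fun v => γ ≤ x v / y v)]
    have e1 : ∀ v ∈ Finset.univ.filter (fun v => γ ≤ x v / y v),
        max (x v - γ * y v) 0 = x v - γ * y v := by
      intro v hv
      have h := (Finset.mem_filter.mp hv).2
      have h' : γ * y v ≤ x v := (le_div_iff₀ (hyv v)).mp h
      exact max_eq_left (by linarith)
    have e2 : ∀ v ∈ Finset.univ.filter (fun v => ¬ γ ≤ x v / y v),
        max (x v - γ * y v) 0 = 0 := by
      intro v hv
      have h := (Finset.mem_filter.mp hv).2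
      push_neg at h
      have h' : x v < γ * y v := (div_lt_iff₀ (hyv v)).mp h
      exact max_eq_right (by linarith)
    rw [Finset.sum_congr rfl e1, Finset.sum_congr rfl e2, Finset.sum_const_zero, add_zero]
  rw [hsum, Finset.sum_sub_distrib, ← Finset.mul_sum, hP1, hP2]

end AuxStrongDuality

/-- strong duality: for any locally maximin allocation `(x, y)`,
`f(S_{≤i}) − γ·g(S_{≤i}) = HS_γ(x ‖ y) = max_S (f(S) − γ·g(S))`, where `S_{≤i}`
collects the decomposition parts of density at least `γ`. -/
theorem strong_duality_hockey_stick (f g : Finset V → ℝ) (hdm : DualModular f g)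
    {k : ℕ} (S : Fin k → Finset V) (hdec : IsDensityDecomposition f g S)
    (γ : ℝ) (hγ : 0 ≤ γ) (x y : V → ℝ) (halloc : Allocation f g x y)
    (hlm : LocallyMaximin f g x y) :
    (f ((Finset.univ.filter (fun i => γ ≤ decompDensity f g S i)).biUnion S) -
        γ * g ((Finset.univ.filter (fun i => γ ≤ decompDensity f g S i)).biUnion S)
      = HS γ x y) ∧
    (∀ T : Finset V,
      f T - γ * g T ≤
        f ((Finset.univ.filter (fun i => γ ≤ decompDensity f g S i)).biUnion S) -
          γ * g ((Finset.univ.filter (fun i => γ ≤ decompDensity f g S i)).biUnion S)) := by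
  rcases eq_or_lt_of_le hγ with h0 | hγpos
  · -- γ = 0
    subst h0
    have hfilt : Finset.univ.filter (fun i => (0 : ℝ) ≤ decompDensity f g S i)
        = Finset.univ := by
      apply Finset.filter_true_of_mem
      intro i _
      exact decompDensity_nonneg hdm hdec i
    rw [hfilt, hdec.cover]
    obtain ⟨⟨hx0, hxs, hxle⟩, hyy⟩ := halloc
    constructor
    · have hHS : HS 0 x y = ∑ v, x v := by
        unfold HS
        apply Finset.sum_congr rfl
        intro v _
        rw [zero_mul, sub_zero]
        exact max_eq_left (hx0 v)
      rw [hHS, hxs]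
      ring
    · intro T
      have hle := hdm.f_mono T Finset.univ (Finset.subset_univ T)
      simp only [zero_mul, sub_zero]
      exact hle
  · -- γ > 0
    have key : ∃ m : ℕ, (∀ j : Fin k, j.val < m → γ ≤ decompDensity f g S j) ∧
        (∀ h : m < k, decompDensity f g S ⟨m, h⟩ < γ) ∧
        (Finset.univ.filter (fun i => γ ≤ decompDensity f g S i)).biUnion S = Cset S m := by
      by_cases hne : (Finset.univ.filter (fun i => γ ≤ decompDensity f g S i)).Nonempty
      · have hMmem := Finset.max'_mem _ hne
        have hM : γ ≤ decompDensity f g S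
            ((Finset.univ.filter (fun i => γ ≤ decompDensity f g S i)).max' hne) :=
          (Finset.mem_filter.mp hMmem).2
        refine ⟨((Finset.univ.filter (fun i => γ ≤ decompDensity f g S i)).max' hne).val + 1,
          ?_, ?_, ?_⟩
        · intro j hj
          have hj' : j ≤ (Finset.univ.filter (fun i => γ ≤ decompDensity f g S i)).max' hne := by
            rw [Fin.le_def]; omega
          exact le_trans hM (rho_antitone hdm hdec hj')
        · intro h
          by_contra hc
          push_neg at hc
          have hmem : (⟨((Finset.univ.filter (fun i => γ ≤ decompDensity f g S i)).max'
              hne).val + 1, h⟩ : Fin k)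
              ∈ Finset.univ.filter (fun i => γ ≤ decompDensity f g S i) :=
            Finset.mem_filter.mpr ⟨Finset.mem_univ _, hc⟩
          have hle := Finset.le_max' _ _ hmem
          rw [Fin.le_def] at hle
          exact Nat.not_succ_le_self _ hle
        · have hFeq : Finset.univ.filter (fun i => γ ≤ decompDensity f g S i)
              = Finset.univ.filter (fun j : Fin k => j.val <
                ((Finset.univ.filter (fun i => γ ≤ decompDensity f g S i)).max' hne).val + 1) := by
            ext j
            simp only [Finset.mem_filter, Finset.mem_univ, true_and]
            constructor
            · intro hj
              have hjF : j ∈ Finset.univ.filter (fun i => γ ≤ decompDensity f g S i) :=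
                Finset.mem_filter.mpr ⟨Finset.mem_univ _, hj⟩
              have hle := Finset.le_max' _ j hjF
              rw [Fin.le_def] at hle
              omega
            · intro hj
              have hj' : j ≤ (Finset.univ.filter
                  (fun i => γ ≤ decompDensity f g S i)).max' hne := by
                rw [Fin.le_def]; omega
              exact le_trans hM (rho_antitone hdm hdec hj')
          show _ = (Finset.univ.filter (fun j : Fin k => j.val <
            ((Finset.univ.filter (fun i => γ ≤ decompDensity f g S i)).max' hne).val
              + 1)).biUnion S
          exact congrArg (fun t : Finset (Fin k) => t.biUnion S) hFeq
      · refine ⟨0, ?_, ?_, ?_⟩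
        · intro j hj
          exact absurd hj (Nat.not_lt_zero _)
        · intro h
          by_contra hc
          push_neg at hc
          exact hne ⟨⟨0, h⟩, Finset.mem_filter.mpr ⟨Finset.mem_univ _, hc⟩⟩
        · rw [Finset.not_nonempty_iff_eq_empty.mp hne]
          simp [Cset]
    obtain ⟨m, hpre, hpost, hAeq⟩ := key
    rw [hAeq]
    have h1 := bound_HS hγ halloc (Cset S m)
    have h2 := HS_level hdm hγpos halloc hlm
    have h3 := key_max hdm hdec hγ m hpre hpost
      (Finset.univ.filter (fun v => γ ≤ x v / y v))
    constructor
    · linarith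
    · intro T
      have h4 := bound_HS hγ halloc T
      linarith
end
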